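/- (Weyl's inequality for Hermitian matrices) Let X and Y be n×n Hermitian matrices with eigenvalues ordered in descending order λ_1(·) ≥ ... ≥ λ_n(·). Then for all indices i, j with 1 ≤ i+j-1 ≤ n: λ_{i+j-1}(X+Y) ≤ λ_i(X) + λ_j(Y). -/
import Mathlib

open Matrix

open scoped RealInnerProductSpace

section aux

variable {n : ℕ}

private lemma apply_eigvec {A : Matrix (Fin n) (Fin n) ℝ} (hA : A.IsHermitian) (k : Fin n) :
    Matrix.toEuclideanLin A (hA.eigenvectorBasis k) =
      hA.eigenvalues k • hA.eigenvectorBasis k := by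
  apply (WithLp.equiv 2 (Fin n → ℝ)).injective
  ext l
  have := congrFun (hA.mulVec_eigenvectorBasis k) l
  simpa [Matrix.toEuclideanLin_apply] using this

private lemma quad_eq {A : Matrix (Fin n) (Fin n) ℝ} (hA : A.IsHermitian)
    (x : EuclideanSpace ℝ (Fin n)) :
    ⟪x, Matrix.toEuclideanLin A x⟫ =
      ∑ k, hA.eigenvalues k * (hA.eigenvectorBasis.repr x k)^2 := by
  set e := hA.eigenvectorBasis with he
  have hx : x = ∑ k, e.repr x k • e k := (e.sum_repr x).symm
  conv_lhs => rw [hx, map_sum]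
  rw [inner_sum]
  refine Finset.sum_congr rfl fun k _ => ?_
  rw [_root_.map_smul, apply_eigvec hA k, inner_smul_right, inner_smul_right,
    ← hx, real_inner_comm, ← e.repr_apply_apply]
  ring

private lemma sum_sq_repr {A : Matrix (Fin n) (Fin n) ℝ} (hA : A.IsHermitian)
    (x : EuclideanSpace ℝ (Fin n)) :
    ∑ k, (hA.eigenvectorBasis.repr x k)^2 = ‖x‖^2 := by
  have h1 : ⟪hA.eigenvectorBasis.repr x, hA.eigenvectorBasis.repr x⟫ = ⟪x, x⟫ :=
    hA.eigenvectorBasis.repr.inner_map_map x x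
  rw [← real_inner_self_eq_norm_sq, ← h1, PiLp.inner_apply]
  refine Finset.sum_congr rfl fun k _ => ?_
  simp [sq]

private lemma repr_eq_zero {A : Matrix (Fin n) (Fin n) ℝ} (hA : A.IsHermitian)
    (S : Finset (Fin n)) {x : EuclideanSpace ℝ (Fin n)}
    (hx : x ∈ Submodule.span ℝ (hA.eigenvectorBasis '' ↑S)) {k : Fin n} (hk : k ∉ S) :
    hA.eigenvectorBasis.repr x k = 0 := by
  induction hx using Submodule.span_induction with
  | mem y hy =>
    obtain ⟨l, hl, rfl⟩ := hy
    rw [hA.eigenvectorBasis.repr_self l]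
    have : k ≠ l := fun h => hk (h ▸ hl)
    simp [EuclideanSpace.single_apply, this]
  | zero => simp
  | add y z _ _ hy hz => rw [map_add]; simp [hy, hz]
  | smul c y _ hy => rw [_root_.map_smul]; simp [hy]

private lemma quad_le {A : Matrix (Fin n) (Fin n) ℝ} (hA : A.IsHermitian)
    (S : Finset (Fin n)) {x : EuclideanSpace ℝ (Fin n)}
    (hx : x ∈ Submodule.span ℝ (hA.eigenvectorBasis '' ↑S)) {c : ℝ}
    (hc : ∀ k ∈ S, hA.eigenvalues k ≤ c) :
    ⟪x, Matrix.toEuclideanLin A x⟫ ≤ c * ‖x‖^2 := by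
  rw [quad_eq hA x, ← sum_sq_repr hA x, Finset.mul_sum]
  refine Finset.sum_le_sum fun k _ => ?_
  by_cases hk : k ∈ S
  · exact mul_le_mul_of_nonneg_right (hc k hk) (sq_nonneg _)
  · rw [repr_eq_zero hA S hx hk]; simp

private lemma le_quad {A : Matrix (Fin n) (Fin n) ℝ} (hA : A.IsHermitian)
    (S : Finset (Fin n)) {x : EuclideanSpace ℝ (Fin n)}
    (hx : x ∈ Submodule.span ℝ (hA.eigenvectorBasis '' ↑S)) {c : ℝ}
    (hc : ∀ k ∈ S, c ≤ hA.eigenvalues k) :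
    c * ‖x‖^2 ≤ ⟪x, Matrix.toEuclideanLin A x⟫ := by
  rw [quad_eq hA x, ← sum_sq_repr hA x, Finset.mul_sum]
  refine Finset.sum_le_sum fun k _ => ?_
  by_cases hk : k ∈ S
  · exact mul_le_mul_of_nonneg_right (hc k hk) (sq_nonneg _)
  · rw [repr_eq_zero hA S hx hk]; simp

private lemma finrank_span_basis {A : Matrix (Fin n) (Fin n) ℝ} (hA : A.IsHermitian)
    (S : Finset (Fin n)) :
    Module.finrank ℝ (Submodule.span ℝ (hA.eigenvectorBasis '' ↑S)) = S.card := by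
  have li : LinearIndependent ℝ (fun k : {x // x ∈ S} => hA.eigenvectorBasis k) :=
    (hA.eigenvectorBasis.orthonormal.linearIndependent).comp _ Subtype.val_injective
  have hr : (⇑hA.eigenvectorBasis '' ↑S) =
      Set.range (fun k : {x // x ∈ S} => hA.eigenvectorBasis k) := by
    ext y
    simp
  rw [hr, finrank_span_eq_card li, Fintype.card_coe]

private lemma finrank_inf_ge (U V : Submodule ℝ (EuclideanSpace ℝ (Fin n))) :
    Module.finrank ℝ U + Module.finrank ℝ V ≤ Module.finrank ℝ (U ⊓ V : Submodule ℝ _) + n := by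
  have h1 := Submodule.finrank_sup_add_finrank_inf_eq U V
  have h2 : Module.finrank ℝ (U ⊔ V : Submodule ℝ _) ≤ n := by
    have := Submodule.finrank_le (U ⊔ V)
    simpa [finrank_euclideanSpace] using this
  omega

end aux

/-- A function `μ : Fin n → ℝ` lists the eigenvalues of the Hermitian matrix `A`
in non-increasing order. -/
def IsDescEigenvalues {n : ℕ} {A : Matrix (Fin n) (Fin n) ℝ}
    (hA : A.IsHermitian) (μ : Fin n → ℝ) : Prop :=
  Antitone μ ∧ ∃ e : Equiv.Perm (Fin n), μ = hA.eigenvalues ∘ e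

/-- Weyl's inequality for Hermitian matrices:
`λ_{i+j-1}(X+Y) ≤ λ_i(X) + λ_j(Y)` (0-based indexing: `λ_{i+j}(X+Y) ≤ λ_i(X) + λ_j(Y)`). -/
theorem weyl_inequality_hermitian {n : ℕ} (X Y : Matrix (Fin n) (Fin n) ℝ)
    (hX : X.IsHermitian) (hY : Y.IsHermitian)
    (μX μY μZ : Fin n → ℝ)
    (hμX : IsDescEigenvalues hX μX) (hμY : IsDescEigenvalues hY μY)
    (hμZ : IsDescEigenvalues (hX.add hY) μZ)
    (i j : Fin n) (h : (i : ℕ) + (j : ℕ) < n) :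
    μZ ⟨(i : ℕ) + (j : ℕ), h⟩ ≤ μX i + μY j := by
  obtain ⟨haX, eX, hfX⟩ := hμX
  obtain ⟨haY, eY, hfY⟩ := hμY
  obtain ⟨haZ, eZ, hfZ⟩ := hμZ
  set m : Fin n := ⟨(i : ℕ) + (j : ℕ), h⟩ with hm
  set hZ := hX.add hY
  -- the three subspaces
  set SX : Finset (Fin n) := (Finset.Ici i).image eX with hSX
  set SY : Finset (Fin n) := (Finset.Ici j).image eY with hSY
  set SZ : Finset (Fin n) := (Finset.Iic m).image eZ with hSZ
  set UX := Submodule.span ℝ (hX.eigenvectorBasis '' ↑SX) with hUX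
  set UY := Submodule.span ℝ (hY.eigenvectorBasis '' ↑SY) with hUY
  set UZ := Submodule.span ℝ (hZ.eigenvectorBasis '' ↑SZ) with hUZ
  -- dimensions
  have cX : Module.finrank ℝ UX = n - (i : ℕ) := by
    rw [hUX, finrank_span_basis, hSX, Finset.card_image_of_injective _ eX.injective,
      Fin.card_Ici]
  have cY : Module.finrank ℝ UY = n - (j : ℕ) := by
    rw [hUY, finrank_span_basis, hSY, Finset.card_image_of_injective _ eY.injective,
      Fin.card_Ici]
  have cZ : Module.finrank ℝ UZ = (i : ℕ) + (j : ℕ) + 1 := by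
    rw [hUZ, finrank_span_basis, hSZ, Finset.card_image_of_injective _ eZ.injective,
      Fin.card_Iic]
  -- the triple intersection is nontrivial
  have hd1 := finrank_inf_ge UX UY
  have hd2 := finrank_inf_ge (UX ⊓ UY) UZ
  have hi : (i : ℕ) ≤ n := i.2.le
  have hj : (j : ℕ) ≤ n := j.2.le
  have hpos : 0 < Module.finrank ℝ (UX ⊓ UY ⊓ UZ : Submodule ℝ _) := by omega
  have hne : (UX ⊓ UY ⊓ UZ : Submodule ℝ _) ≠ ⊥ := by
    intro hb
    rw [hb, finrank_bot] at hpos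
    exact lt_irrefl 0 hpos
  obtain ⟨x, hxmem, hx0⟩ := Submodule.exists_mem_ne_zero_of_ne_bot hne
  obtain ⟨⟨hxX, hxY⟩, hxZ⟩ := hxmem
  -- eigenvalue bounds on the subspaces
  have hcX : ∀ k ∈ SX, hX.eigenvalues k ≤ μX i := by
    intro k hk
    obtain ⟨l, hl, rfl⟩ := Finset.mem_image.mp hk
    have : hX.eigenvalues (eX l) = μX l := by rw [hfX]; rfl
    rw [this]
    exact haX (Finset.mem_Ici.mp hl)
  have hcY : ∀ k ∈ SY, hY.eigenvalues k ≤ μY j := by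
    intro k hk
    obtain ⟨l, hl, rfl⟩ := Finset.mem_image.mp hk
    have : hY.eigenvalues (eY l) = μY l := by rw [hfY]; rfl
    rw [this]
    exact haY (Finset.mem_Ici.mp hl)
  have hcZ : ∀ k ∈ SZ, μZ m ≤ hZ.eigenvalues k := by
    intro k hk
    obtain ⟨l, hl, rfl⟩ := Finset.mem_image.mp hk
    have : hZ.eigenvalues (eZ l) = μZ l := by rw [hfZ]; rfl
    rw [this]
    exact haZ (Finset.mem_Iic.mp hl)
  -- combine
  have hXq := quad_le hX SX hxX hcX
  have hYq := quad_le hY SY hxY hcY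
  have hZq := le_quad hZ SZ hxZ hcZ
  have hsum : ⟪x, Matrix.toEuclideanLin (X + Y) x⟫ =
      ⟪x, Matrix.toEuclideanLin X x⟫ + ⟪x, Matrix.toEuclideanLin Y x⟫ := by
    rw [map_add]
    simp [inner_add_right]
  have key : μZ m * ‖x‖^2 ≤ (μX i + μY j) * ‖x‖^2 := by
    calc μZ m * ‖x‖^2 ≤ ⟪x, Matrix.toEuclideanLin (X + Y) x⟫ := hZq
      _ = ⟪x, Matrix.toEuclideanLin X x⟫ + ⟪x, Matrix.toEuclideanLin Y x⟫ := hsum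
      _ ≤ μX i * ‖x‖^2 + μY j * ‖x‖^2 := add_le_add hXq hYq
      _ = (μX i + μY j) * ‖x‖^2 := by ring
  have hx0' : 0 < ‖x‖ := norm_pos_iff.mpr hx0
  have hnorm : (0 : ℝ) < ‖x‖^2 := by positivity
  exact le_of_mul_le_mul_right (by simpa [mul_comm] using key) hnorm
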